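/- Let N ≥ 2. For each function ℓ : {1,…,N} → {1,…,N}, define K(ℓ) = (1/2)I + (1/2)Σᵢ₌₁ᴺ eᵢ e_{ℓ(i)}ᵀ, and let E = N^{−N} Σ_ℓ K(ℓ) ⊗ K(ℓ) (average over all N^N functions ℓ). Let R = ((I−J) ⊗ (I−J)) · E, let u = Σᵢ₌₁ᴺ eᵢ ⊗ eᵢ ∈ ℝ^{N²}, and let v = (1/√(N−1))·(u − (1/N)𝟙_{N²}) where 𝟙_{N²} is the all-ones vector in ℝ^{N²}. Then R = (1/4)·(I−J)⊗(I−J) + ((N−1)/(4N))·vvᵀ, and the spectral radius of R equals ρ(R) = 1/2 − 1/(4N). -/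

import Mathlib

open Matrix Kronecker Finset

/-- `J = (1/N) 𝟙 𝟙ᵀ`, the `N × N` averaging matrix. -/
noncomputable def Jmat (N : ℕ) : Matrix (Fin N) (Fin N) ℝ :=
  Matrix.of fun _ _ => (N : ℝ)⁻¹

/-- The spectral radius of a real square matrix: the maximum modulus of its
complex eigenvalues. -/
noncomputable def specRad {n : Type*} [Fintype n] [DecidableEq n]
    (A : Matrix n n ℝ) : ℝ :=
  (spectralRadius ℂ (A.map Complex.ofReal)).toReal

/-!
Write `Q = I - J`, `P = Q ⊗ Q` and `S(ℓ) = Σᵢ eᵢ e_{ℓ(i)}ᵀ`, so that `K(ℓ) = (I + S(ℓ))/2`,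
`u = vec I` and `v = vec Q / √(N-1)`. For uniformly random `ℓ` the values `ℓ(a)` and `ℓ(c)` are
independent and uniform when `a ≠ c`, which gives
`E = (1/4) (I + J) ⊗ (I + J) + (1/(4N)) vec(I) vec(Q)ᵀ`.
Since `QJ = 0` and `P vec(I) = vec(Q)`, this yields `R = (1/4) P + (1/(4N)) vec(Q) vec(Q)ᵀ`.
The idempotents `P` and `W = vvᵀ` satisfy `PW = WP = W`, so `R = aP + bW` is annihilated by
`X (X - a) (X - a - b)`, while `W ≠ 0` makes `a + b` an eigenvalue.
-/

section FunctionSums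

variable {α β : Type*} [Fintype α] [DecidableEq α] [Fintype β]

theorem sum_fun_comp_eval {M : Type*} [AddCommMonoid M] (a : α) (f : β → M) :
    ∑ ℓ : α → β, f (ℓ a) = Fintype.card β ^ (Fintype.card α - 1) • ∑ x, f x := by
  rw [← (Equiv.funSplitAt a β).symm.sum_comp]
  simp [Fintype.sum_prod_type, Equiv.funSplitAt_symm_apply, Finset.sum_const,
    Fintype.card_subtype_compl, Finset.smul_sum]

theorem sum_fun_comp_eval_mul_comp_eval {R : Type*} [CommSemiring R] {a c : α} (hac : a ≠ c)
    (f g : β → R) :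
    ∑ ℓ : α → β, f (ℓ a) * g (ℓ c) =
      Fintype.card β ^ (Fintype.card α - 2) • ((∑ x, f x) * ∑ y, g y) := by
  rw [← (Equiv.funSplitAt a β).symm.sum_comp]
  simp only [Fintype.sum_prod_type, Equiv.funSplitAt_symm_apply, dif_neg hac.symm, dite_true]
  simp_rw [← Finset.mul_sum, sum_fun_comp_eval (⟨c, hac.symm⟩ : { j // j ≠ a }) g,
    Fintype.card_subtype_compl, Fintype.card_unique, ← Finset.sum_mul, mul_smul_comm,
    Nat.sub_sub]

end FunctionSums

section Idempotent

open Polynomial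

variable {𝕜 A : Type*} [Field 𝕜] [Ring A] [Algebra 𝕜 A] {p q : A}

theorem spectrum_smul_add_smul_subset (hp : IsIdempotentElem p) (hq : IsIdempotentElem q)
    (hpq : p * q = q) (hqp : q * p = q) (a b : 𝕜) :
    spectrum 𝕜 (a • p + b • q) ⊆ {0, a, a + b} := by
  nontriviality A
  set x := a • p + b • q
  have hxp : x * p = x := by simp [x, add_mul, hp.eq, hqp]
  have hxq : x * q = (a + b) • q := by simp [x, add_mul, hq.eq, hpq, add_smul]
  have hqx : q * x = (a + b) • q := by simp [x, mul_add, hq.eq, hqp, add_smul]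
  have hxx : x * x = a • x + (b * (a + b)) • q := calc
    x * x = x * (a • p + b • q) := rfl
    _ = a • x + (b * (a + b)) • q := by
      rw [mul_add, mul_smul_comm, mul_smul_comm, hxp, hxq, smul_smul]
  have hroot : aeval x (X * (X - C a) * (X - C (a + b))) = 0 := by
    simp only [map_mul, map_sub, aeval_X, aeval_C, Algebra.algebraMap_eq_smul_one, mul_sub,
      mul_smul_comm, mul_one, hxx, sub_mul, add_mul, smul_mul_assoc, hqx]
    module
  intro μ hμ
  have := spectrum.subset_polynomial_aeval x (X * (X - C a) * (X - C (a + b))) ⟨μ, hμ, rfl⟩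
  rw [hroot, spectrum.zero_eq] at this
  simp only [eval_mul, eval_X, eval_sub, eval_C, Set.mem_singleton_iff, mul_eq_zero,
    sub_eq_zero] at this
  simp only [Set.mem_insert_iff, Set.mem_singleton_iff]
  tauto

theorem add_mem_spectrum_smul_add_smul (hq : IsIdempotentElem q) (hpq : p * q = q)
    (hq0 : q ≠ 0) (a b : 𝕜) : a + b ∈ spectrum 𝕜 (a • p + b • q) := by
  intro hunit
  apply hq0
  have : (algebraMap 𝕜 A (a + b) - (a • p + b • q)) * q = 0 := by
    simp [Algebra.algebraMap_eq_smul_one, sub_mul, add_mul, hq.eq, hpq, add_smul]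
  exact hunit.mul_right_eq_zero.mp this

end Idempotent

theorem spectralRadius_smul_add_smul {𝕜 A : Type*} [NormedField 𝕜] [Ring A] [Algebra 𝕜 A]
    {p q : A} (hp : IsIdempotentElem p) (hq : IsIdempotentElem q)
    (hpq : p * q = q) (hqp : q * p = q) (hq0 : q ≠ 0) {a b : 𝕜} (hab : ‖a‖ ≤ ‖a + b‖) :
    spectralRadius 𝕜 (a • p + b • q) = ‖a + b‖₊ := by
  refine le_antisymm (iSup₂_le fun μ hμ => ?_)
    (le_iSup₂ (f := fun μ _ => (‖μ‖₊ : ENNReal)) _ (add_mem_spectrum_smul_add_smul hq hpq hq0 a b))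
  rcases spectrum_smul_add_smul_subset hp hq hpq hqp a b hμ with rfl | rfl | rfl
  · simp
  · exact_mod_cast hab
  · exact le_rfl

theorem specRad_smul_add_smul_vecMulVec {n : Type*} [Fintype n] [DecidableEq n]
    {P : Matrix n n ℝ} (hP : IsIdempotentElem P) (hPt : Pᵀ = P) {v : n → ℝ} (hv : v ⬝ᵥ v = 1)
    (hPv : P *ᵥ v = v) {a b : ℝ} (ha : 0 ≤ a) (hb : 0 ≤ b) :
    specRad (a • P + b • vecMulVec v v) = a + b := by
  set W := vecMulVec v v with hWdef
  have hW : IsIdempotentElem W := by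
    rw [IsIdempotentElem, vecMulVec_mul_vecMulVec, hv, one_smul]
  have hPW : P * W = W := by rw [mul_vecMulVec, hPv]
  have hWP : W * P = W := by rw [vecMulVec_mul, ← mulVec_transpose, hPt, hPv]
  have hW0 : W ≠ 0 := fun h => by simpa [← hWdef, h, hv] using trace_vecMulVec v v
  let φ := (Complex.ofRealHom : ℝ →+* ℂ).mapMatrix (m := n)
  have hφ : (a • P + b • W).map Complex.ofReal = (a : ℂ) • φ P + (b : ℂ) • φ W := by
    ext i j; simp [φ]
  have hab : ‖(a : ℂ)‖ ≤ ‖(a : ℂ) + b‖ := by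
    rw [← Complex.ofReal_add, Complex.norm_of_nonneg ha, Complex.norm_of_nonneg (by positivity)]
    linarith
  have hφW : φ W ≠ 0 := (map_ne_zero_iff φ (map_injective Complex.ofReal_injective)).mpr hW0
  rw [specRad, hφ, spectralRadius_smul_add_smul (hP.map φ) (hW.map φ) (by rw [← map_mul, hPW])
    (by rw [← map_mul, hWP]) hφW hab, ← Complex.ofReal_add, ENNReal.coe_toReal, coe_nnnorm,
    Complex.norm_of_nonneg (by positivity)]

theorem vecMulVec_inv_sqrt_smul {n : Type*} (w : n → ℝ) {s : ℝ} (hs : 0 ≤ s) :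
    vecMulVec ((√s)⁻¹ • w) ((√s)⁻¹ • w) = s⁻¹ • vecMulVec w w := by
  rw [smul_vecMulVec, vecMulVec_smul, smul_smul, ← mul_inv, Real.mul_self_sqrt hs]

theorem inv_sqrt_smul_dotProduct_self {n : Type*} [Fintype n] (w : n → ℝ) {s : ℝ} (hs : 0 ≤ s) :
    ((√s)⁻¹ • w) ⬝ᵥ ((√s)⁻¹ • w) = s⁻¹ * (w ⬝ᵥ w) := by
  rw [smul_dotProduct, dotProduct_smul, smul_smul, ← mul_inv, Real.mul_self_sqrt hs, smul_eq_mul]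

section Averaging

variable {N : ℕ}

@[simp]
theorem Jmat_apply (i j : Fin N) : Jmat N i j = (N : ℝ)⁻¹ := rfl

theorem transpose_Jmat : (Jmat N)ᵀ = Jmat N := rfl

theorem Jmat_mul_self : Jmat N * Jmat N = Jmat N := by
  ext i j
  have hN : (N : ℝ) ≠ 0 := Nat.cast_ne_zero.mpr (Fin.pos i).ne'
  simp [Matrix.mul_apply, hN]

theorem one_sub_Jmat_mul_Jmat : (1 - Jmat N) * Jmat N = 0 := by
  rw [sub_mul, one_mul, Jmat_mul_self, sub_self]

theorem isIdempotentElem_one_sub_Jmat : IsIdempotentElem (1 - Jmat N) := by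
  rw [IsIdempotentElem, mul_sub, mul_one, one_sub_Jmat_mul_Jmat, sub_zero]

theorem transpose_one_sub_Jmat : (1 - Jmat N)ᵀ = 1 - Jmat N := by
  rw [transpose_sub, transpose_one, transpose_Jmat]

theorem trace_one_sub_Jmat [NeZero N] : (1 - Jmat N).trace = (N : ℝ) - 1 := by
  simp [Matrix.trace]

theorem isIdempotentElem_kronecker_one_sub_Jmat :
    IsIdempotentElem ((1 - Jmat N) ⊗ₖ (1 - Jmat N)) := by
  rw [IsIdempotentElem, ← mul_kronecker_mul, isIdempotentElem_one_sub_Jmat.eq]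

theorem transpose_kronecker_one_sub_Jmat :
    ((1 - Jmat N) ⊗ₖ (1 - Jmat N))ᵀ = (1 - Jmat N) ⊗ₖ (1 - Jmat N) := by
  rw [← kroneckerMap_transpose, transpose_one_sub_Jmat]

theorem kronecker_one_sub_Jmat_mulVec_vec (X : Matrix (Fin N) (Fin N) ℝ) :
    ((1 - Jmat N) ⊗ₖ (1 - Jmat N)) *ᵥ vec X = vec ((1 - Jmat N) * X * (1 - Jmat N)) := by
  rw [kronecker_mulVec_vec, transpose_one_sub_Jmat]

theorem vec_one_sub_Jmat_dotProduct_self [NeZero N] :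
    vec (1 - Jmat N) ⬝ᵥ vec (1 - Jmat N) = (N : ℝ) - 1 := by
  rw [vec_dotProduct_vec, transpose_one_sub_Jmat, isIdempotentElem_one_sub_Jmat.eq,
    trace_one_sub_Jmat]

end Averaging

section PushSum

variable {N : ℕ}

noncomputable def pushSumMatrix (ℓ : Fin N → Fin N) : Matrix (Fin N) (Fin N) ℝ :=
  (1 / 2 : ℝ) • 1 + (1 / 2 : ℝ) • ∑ i, Matrix.single i (ℓ i) (1 : ℝ)

theorem pushSumMatrix_apply (ℓ : Fin N → Fin N) (a b : Fin N) :
    pushSumMatrix ℓ a b =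
      2⁻¹ * ((1 : Matrix (Fin N) (Fin N) ℝ) a b + if ℓ a = b then 1 else 0) := by
  simp [pushSumMatrix, Matrix.sum_apply, Matrix.single, ite_and, mul_add]

theorem mean_pushSumMatrix_kronecker :
    ((N : ℝ) ^ N)⁻¹ • ∑ ℓ, pushSumMatrix ℓ ⊗ₖ pushSumMatrix ℓ =
      (1 / 4 : ℝ) • ((1 + Jmat N) ⊗ₖ (1 + Jmat N)) +
        (4 * N : ℝ)⁻¹ • vecMulVec (vec 1) (vec (1 - Jmat N)) := by
  ext ⟨a, c⟩ ⟨b, d⟩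
  have hN : (N : ℝ) ≠ 0 := Nat.cast_ne_zero.mpr (Fin.pos a).ne'
  let k (a b x : Fin N) : ℝ :=
    2⁻¹ * ((1 : Matrix (Fin N) (Fin N) ℝ) a b + if x = b then 1 else 0)
  have hk (ℓ : Fin N → Fin N) (a b : Fin N) : pushSumMatrix ℓ a b = k a b (ℓ a) :=
    pushSumMatrix_apply ℓ a b
  simp only [Matrix.smul_apply, Matrix.sum_apply, kronecker_apply, hk, Matrix.add_apply,
    vecMulVec_apply, vec, Matrix.sub_apply, Jmat_apply, smul_eq_mul]
  rcases eq_or_ne a c with rfl | hac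
  · have hpow : (N : ℝ) ^ N = N ^ (N - 1) * N := by
      rw [← pow_succ, Nat.sub_add_cancel (Fin.pos a)]
    rw [sum_fun_comp_eval a (fun x => k a b x * k a d x)]
    simp only [nsmul_eq_mul, Fintype.card_fin, Nat.cast_pow, hpow, one_apply, k]
    split_ifs <;> simp [Finset.sum_ite_eq', Finset.sum_add_distrib, mul_add, add_mul, *] <;>
      field_simp <;> ring
  · have hpow : (N : ℝ) ^ N = N ^ (N - 2) * N ^ 2 := by
      have := Fin.val_ne_of_ne hac
      rw [← pow_add, Nat.sub_add_cancel (by omega)]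
    rw [sum_fun_comp_eval_mul_comp_eval hac (k a b) (k c d)]
    simp only [nsmul_eq_mul, Fintype.card_fin, Nat.cast_pow, hpow, one_apply, if_neg hac.symm,
      k]
    split_ifs <;> simp [Finset.sum_add_distrib, mul_add, *] <;> field_simp <;> ring

theorem kronecker_one_sub_Jmat_mul_mean_pushSumMatrix_kronecker :
    ((1 - Jmat N) ⊗ₖ (1 - Jmat N)) *
        (((N : ℝ) ^ N)⁻¹ • ∑ ℓ, pushSumMatrix ℓ ⊗ₖ pushSumMatrix ℓ) =
      (1 / 4 : ℝ) • ((1 - Jmat N) ⊗ₖ (1 - Jmat N)) +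
        (4 * N : ℝ)⁻¹ • vecMulVec (vec (1 - Jmat N)) (vec (1 - Jmat N)) := by
  have hQ : (1 - Jmat N) * (1 + Jmat N) = 1 - Jmat N := by
    rw [mul_add, mul_one, one_sub_Jmat_mul_Jmat, add_zero]
  rw [mean_pushSumMatrix_kronecker, mul_add, mul_smul_comm, mul_smul_comm, ← mul_kronecker_mul,
    hQ, mul_vecMulVec, kronecker_one_sub_Jmat_mulVec_vec, mul_one,
    isIdempotentElem_one_sub_Jmat.eq]

end PushSum

theorem stmt18 {N : ℕ} (hN : 2 ≤ N)
    -- the Push-Sum update matrices `K(ℓ) = (1/2)I + (1/2)Σᵢ eᵢ e_{ℓ(i)}ᵀ`: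
    (K : (Fin N → Fin N) → Matrix (Fin N) (Fin N) ℝ)
    (hKdef : ∀ ℓ, K ℓ =
      (1 / 2 : ℝ) • 1 + (1 / 2 : ℝ) • ∑ i, Matrix.single i (ℓ i) (1 : ℝ))
    -- `E = N^{-N} Σ_ℓ K(ℓ) ⊗ K(ℓ)`:
    (E : Matrix (Fin N × Fin N) (Fin N × Fin N) ℝ)
    (hE : E = ((N : ℝ) ^ N)⁻¹ • ∑ ℓ : Fin N → Fin N, (K ℓ ⊗ₖ K ℓ))
    (R : Matrix (Fin N × Fin N) (Fin N × Fin N) ℝ)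
    (hR : R = ((1 - Jmat N) ⊗ₖ (1 - Jmat N)) * E)
    -- `u = Σᵢ eᵢ ⊗ eᵢ`:
    (u : Fin N × Fin N → ℝ)
    (hu : ∀ q, u q = ∑ i, (Pi.single i (1 : ℝ) : Fin N → ℝ) q.1 * (Pi.single i (1 : ℝ) : Fin N → ℝ) q.2)
    -- `v = (1/√(N−1))(u − (1/N)𝟙_{N²})`:
    (v : Fin N × Fin N → ℝ)
    (hv : v = (Real.sqrt ((N : ℝ) - 1))⁻¹ • (u - fun _ => (N : ℝ)⁻¹)) :
    R = (1 / 4 : ℝ) • ((1 - Jmat N) ⊗ₖ (1 - Jmat N)) +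
        (((N : ℝ) - 1) / (4 * N)) • Matrix.vecMulVec v v ∧
      specRad R = 1 / 2 - 1 / (4 * N) := by
  have : NeZero N := ⟨by omega⟩
  have hN1 : (0 : ℝ) < N - 1 := by
    rw [sub_pos, Nat.one_lt_cast]; omega
  obtain rfl : K = pushSumMatrix := funext hKdef
  obtain rfl : u = vec 1 := funext fun q => by
    simp [hu, vec, one_apply, Pi.single_apply, eq_comm]
  replace hv : v = (√((N : ℝ) - 1))⁻¹ • vec (1 - Jmat N) := by rw [hv, vec_sub]; rfl
  have hRW : R = (1 / 4 : ℝ) • ((1 - Jmat N) ⊗ₖ (1 - Jmat N)) +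
      (((N : ℝ) - 1) / (4 * N)) • vecMulVec v v := by
    rw [hR, hE, kronecker_one_sub_Jmat_mul_mean_pushSumMatrix_kronecker, hv,
      vecMulVec_inv_sqrt_smul _ hN1.le, smul_smul]
    congr 2
    field_simp
  refine ⟨hRW, ?_⟩
  have hvv : v ⬝ᵥ v = 1 := by
    rw [hv, inv_sqrt_smul_dotProduct_self _ hN1.le, vec_one_sub_Jmat_dotProduct_self,
      inv_mul_cancel₀ hN1.ne']
  have hPv : ((1 - Jmat N) ⊗ₖ (1 - Jmat N)) *ᵥ v = v := by
    rw [hv, mulVec_smul, kronecker_one_sub_Jmat_mulVec_vec, isIdempotentElem_one_sub_Jmat.eq,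
      isIdempotentElem_one_sub_Jmat.eq]
  rw [hRW, specRad_smul_add_smul_vecMulVec (isIdempotentElem_kronecker_one_sub_Jmat (N := N))
    transpose_kronecker_one_sub_Jmat hvv hPv (by norm_num) (by positivity)]
  field_simp
  ring
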